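/- arXiv:1510.00284 — 2 statements merged into one kernel-verified Lean document; each statement's English description precedes it below -/
import Mathlib

section
/- Let N ≥ 1, let ã₀, a : Fin N → ℝ with ã₀_i > 0 for all i, let 0 ≤ Q < 1, and suppose (1 − Q) ã₀_i ≤ a_i ≤ (1 + Q) ã₀_i for all i. If v : Fin N → ℝ is nonzero, λ ∈ ℝ, and A[a] v = λ · (A[ã₀] v) (generalized eigenvalue equation), then 1 − Q ≤ λ ≤ 1 + Q; consequently the ratio of any two such generalized eigenvalues is at most (1 + Q)/(1 − Q). -/
/-!
Element by element, `A[a] = Dᵀ diag(w) D`, where `D : ℝᴺ → ℝᴺ⁺¹` is the difference operator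
`(D v)_k = v_k − v_{k−1}` (with `v_{−1} = v_N = 0`) and `w = (a₀, …, a_{N−1}, a_{N−1})`.
So `vᵀ A[a] v = ∑ w_k (D v)_k²` is monotone and linear in `a`, and positive when `a > 0` and
`v ≠ 0`, because `D` is injective. Pairing `A[a] v = λ A[ã₀] v` with `v` makes `λ` a Rayleigh
quotient, which the coefficient bounds squeeze between `1 − Q` and `1 + Q`.
-/

open Matrix

/-- The 1D FEM stiffness matrix (4.4) (0-based indexing, grid factor `1/h` omitted):
tridiagonal with `(A[a])_{i,i} = a_i + a_{i+1}` for `i = 0,…,N−2`,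
`(A[a])_{N−1,N−1} = 2 a_{N−1}`, and `(A[a])_{i,i+1} = (A[a])_{i+1,i} = −a_{i+1}`. -/
def stiff {N : ℕ} (a : Fin N → ℝ) : Matrix (Fin N) (Fin N) ℝ :=
  Matrix.of fun i j =>
    let a' : ℕ → ℝ := fun k => if h : k < N then a ⟨k, h⟩ else 0
    if (i : ℕ) = (j : ℕ) then
      (if (i : ℕ) = N - 1 then 2 * a' i else a' i + a' ((i : ℕ) + 1))
    else if (i : ℕ) + 1 = (j : ℕ) then -a' j
    else if (j : ℕ) + 1 = (i : ℕ) then -a' i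
    else 0

open Finset

def diffMatrix (n : ℕ) : Matrix (Fin (n + 1)) (Fin n) ℝ :=
  of fun k j => (Pi.single j.castSucc 1 - Pi.single j.succ 1 : Fin (n + 1) → ℝ) k

def clampWeights {n : ℕ} (a : Fin (n + 1) → ℝ) : Fin (n + 2) → ℝ := fun k => a (Fin.clamp k n)

lemma clampWeights_castSucc {n : ℕ} (a : Fin (n + 1) → ℝ) (i : Fin (n + 1)) :
    clampWeights a i.castSucc = a i := by
  simp [clampWeights, Fin.clamp, i.is_le]

lemma clampWeights_succ {n : ℕ} (a : Fin (n + 1) → ℝ) (i : Fin (n + 1)) :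
    clampWeights a i.succ = if h : (i : ℕ) + 1 < n + 1 then a ⟨i + 1, h⟩ else a i := by
  unfold clampWeights Fin.clamp
  split_ifs with h
  · congr; simp; omega
  · congr 1; ext; simp; omega

lemma transpose_mul_diagonal_mul_apply {m n : Type*} [Fintype m] [DecidableEq m]
    (D : Matrix m n ℝ) (w : m → ℝ) (i j : n) :
    (Dᵀ * diagonal w * D) i j = ∑ k, w k * D k i * D k j := by
  rw [mul_apply]
  simp only [mul_diagonal, transpose_apply]
  exact sum_congr rfl fun k _ => by ring

lemma sum_mul_single_mul_single {m : Type*} [Fintype m] [DecidableEq m] (w : m → ℝ) (p q : m) :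
    ∑ k, w k * (Pi.single p 1 : m → ℝ) k * (Pi.single q 1 : m → ℝ) k =
      if p = q then w p else 0 := by
  by_cases h : p = q <;> simp [Pi.single_apply, h, Ne.symm]

theorem stiff_eq_transpose_mul_diagonal_mul {n : ℕ} (a : Fin (n + 1) → ℝ) :
    stiff a = (diffMatrix (n + 1))ᵀ * diagonal (clampWeights a) * diffMatrix (n + 1) := by
  ext ⟨i, hi⟩ ⟨j, hj⟩
  rw [transpose_mul_diagonal_mul_apply]
  simp only [diffMatrix, of_apply, Pi.sub_apply, mul_sub, sub_mul, sum_sub_distrib,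
    sum_mul_single_mul_single]
  simp only [clampWeights_castSucc, clampWeights_succ, stiff, of_apply, Fin.ext_iff,
    Fin.val_castSucc, Fin.val_succ, Nat.add_sub_cancel]
  split_ifs <;> subst_vars <;> first | omega | ring

lemma dotProduct_transpose_mul_diagonal_mul_mulVec {m n : Type*} [Fintype m] [Fintype n]
    [DecidableEq m] (D : Matrix m n ℝ) (w : m → ℝ) (v : n → ℝ) :
    v ⬝ᵥ (Dᵀ * diagonal w * D) *ᵥ v = ∑ k, w k * (D *ᵥ v) k ^ 2 := by
  rw [← mulVec_mulVec, ← mulVec_mulVec, dotProduct_mulVec, vecMul_transpose]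
  simp only [dotProduct, mulVec_diagonal]
  exact sum_congr rfl fun k _ => by ring

lemma diffMatrix_mulVec {n : ℕ} (v : Fin n → ℝ) :
    diffMatrix n *ᵥ v = Fin.snoc v 0 - Fin.cons 0 v := by
  ext k
  simp only [mulVec, dotProduct, diffMatrix, of_apply, Pi.sub_apply, sub_mul, sum_sub_distrib]
  congr 1
  · induction k using Fin.lastCases <;> simp [Pi.single_apply, Fin.castSucc_ne_last]
  · induction k using Fin.cases <;> simp [Pi.single_apply, Fin.succ_ne_zero]

lemma eq_zero_of_diffMatrix_mulVec_eq_zero {n : ℕ} {v : Fin n → ℝ}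
    (h : diffMatrix n *ᵥ v = 0) : v = 0 := by
  rw [diffMatrix_mulVec, sub_eq_zero] at h
  cases n with
  | zero => exact Subsingleton.elim _ _
  | succ n =>
    funext j
    induction j using Fin.induction with
    | zero => simpa using congr_fun h 0
    | succ j ih =>
      have := congr_fun h j.succ.castSucc
      rwa [Fin.snoc_castSucc, ← Fin.succ_castSucc, Fin.cons_succ, ih] at this

theorem dotProduct_stiff_mulVec {n : ℕ} (a v : Fin (n + 1) → ℝ) :
    v ⬝ᵥ stiff a *ᵥ v = ∑ k, clampWeights a k * (diffMatrix (n + 1) *ᵥ v) k ^ 2 := by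
  rw [stiff_eq_transpose_mul_diagonal_mul, dotProduct_transpose_mul_diagonal_mul_mulVec]

lemma stiff_smul {N : ℕ} (c : ℝ) (a : Fin N → ℝ) : stiff (c • a) = c • stiff a := by
  ext i j
  simp only [stiff, of_apply, Matrix.smul_apply, Pi.smul_apply, smul_eq_mul]
  split_ifs <;> ring

lemma dotProduct_stiff_mulVec_mono {N : ℕ} {a b : Fin N → ℝ} (h : ∀ i, a i ≤ b i)
    (v : Fin N → ℝ) : v ⬝ᵥ stiff a *ᵥ v ≤ v ⬝ᵥ stiff b *ᵥ v := by
  cases N with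
  | zero => simp [dotProduct]
  | succ n =>
    rw [dotProduct_stiff_mulVec, dotProduct_stiff_mulVec]
    gcongr with k
    exact h _

lemma dotProduct_stiff_mulVec_pos {N : ℕ} {a v : Fin N → ℝ} (ha : ∀ i, 0 < a i) (hv : v ≠ 0) :
    0 < v ⬝ᵥ stiff a *ᵥ v := by
  cases N with
  | zero => exact absurd (Subsingleton.elim v 0) hv
  | succ n =>
    obtain ⟨k, hk⟩ := Function.ne_iff.mp (mt eq_zero_of_diffMatrix_mulVec_eq_zero hv)
    rw [dotProduct_stiff_mulVec]
    exact sum_pos' (fun j _ => mul_nonneg (ha _).le (sq_nonneg _))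
      ⟨k, mem_univ k, mul_pos (ha _) (sq_pos_of_ne_zero hk)⟩

theorem stiff_generalizedEigenvalue_mem_Icc {N : ℕ} {a0 a : Fin N → ℝ} {lo hi : ℝ}
    (ha0 : ∀ i, 0 < a0 i) (hlo : ∀ i, lo * a0 i ≤ a i) (hhi : ∀ i, a i ≤ hi * a0 i)
    {v : Fin N → ℝ} (hv : v ≠ 0) {lam : ℝ} (h : stiff a *ᵥ v = lam • stiff a0 *ᵥ v) :
    lam ∈ Set.Icc lo hi := by
  have hpos := dotProduct_stiff_mulVec_pos ha0 hv
  have hlam : v ⬝ᵥ stiff a *ᵥ v = lam * v ⬝ᵥ stiff a0 *ᵥ v := by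
    rw [h, dotProduct_smul, smul_eq_mul]
  have hscale (c : ℝ) : v ⬝ᵥ stiff (c • a0) *ᵥ v = c * v ⬝ᵥ stiff a0 *ᵥ v := by
    rw [stiff_smul, smul_mulVec, dotProduct_smul, smul_eq_mul]
  constructor
  · refine le_of_mul_le_mul_right ?_ hpos
    rw [← hscale lo, ← hlam]
    exact dotProduct_stiff_mulVec_mono hlo v
  · refine le_of_mul_le_mul_right ?_ hpos
    rw [← hscale hi, ← hlam]
    exact dotProduct_stiff_mulVec_mono hhi v

theorem stmt13_general {N : ℕ} (a0 a : Fin N → ℝ) (ha0 : ∀ i, 0 < a0 i)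
    (Q : ℝ) (hQ1 : Q < 1)
    (hab : ∀ i, (1 - Q) * a0 i ≤ a i ∧ a i ≤ (1 + Q) * a0 i) :
    (∀ (v : Fin N → ℝ), v ≠ 0 → ∀ lam : ℝ,
      (stiff a).mulVec v = lam • (stiff a0).mulVec v →
      1 - Q ≤ lam ∧ lam ≤ 1 + Q) ∧
    (∀ (v w : Fin N → ℝ), v ≠ 0 → w ≠ 0 → ∀ lam mu : ℝ,
      (stiff a).mulVec v = lam • (stiff a0).mulVec v →
      (stiff a).mulVec w = mu • (stiff a0).mulVec w →
      lam / mu ≤ (1 + Q) / (1 - Q)) := by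
  have bounds (v : Fin N → ℝ) (hv : v ≠ 0) (lam : ℝ)
      (h : stiff a *ᵥ v = lam • stiff a0 *ᵥ v) : 1 - Q ≤ lam ∧ lam ≤ 1 + Q :=
    stiff_generalizedEigenvalue_mem_Icc ha0 (fun i => (hab i).1) (fun i => (hab i).2) hv h
  refine ⟨bounds, fun v w hv hw lam mu hlam hmu => ?_⟩
  obtain ⟨hlam_lo, hlam_hi⟩ := bounds v hv lam hlam
  obtain ⟨hmu_lo, -⟩ := bounds w hw mu hmu
  exact div_le_div₀ (by linarith) hlam_hi (by linarith) hmu_lo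

/-- Lemma of §4.4: condition-number bound for the
preconditioned matrix. If `(1 − Q) ã₀ᵢ ≤ aᵢ ≤ (1 + Q) ã₀ᵢ` with `ã₀ᵢ > 0`,
`0 ≤ Q < 1`, then any generalized eigenvalue `λ` with `A[a] v = λ A[ã₀] v`,
`v ≠ 0`, satisfies `1 − Q ≤ λ ≤ 1 + Q`; hence the ratio of any two generalized
eigenvalues is at most `(1 + Q)/(1 − Q)`. -/
theorem stmt13 {N : ℕ} (hN : 1 ≤ N) (a0 a : Fin N → ℝ) (ha0 : ∀ i, 0 < a0 i)
    (Q : ℝ) (hQ0 : 0 ≤ Q) (hQ1 : Q < 1)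
    (hab : ∀ i, (1 - Q) * a0 i ≤ a i ∧ a i ≤ (1 + Q) * a0 i) :
    (∀ (v : Fin N → ℝ), v ≠ 0 → ∀ lam : ℝ,
      (stiff a).mulVec v = lam • (stiff a0).mulVec v →
      1 - Q ≤ lam ∧ lam ≤ 1 + Q) ∧
    (∀ (v w : Fin N → ℝ), v ≠ 0 → w ≠ 0 → ∀ lam mu : ℝ,
      (stiff a).mulVec v = lam • (stiff a0).mulVec v →
      (stiff a).mulVec w = mu • (stiff a0).mulVec w →
      lam / mu ≤ (1 + Q) / (1 - Q)) :=
  stmt13_general a0 a ha0 Q hQ1 hab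
end

section
/- Let L ≥ 1, N = 2^L, and let S ∈ ℝ^{N×N} be the upper shift matrix, S_{k,k'} = 1 if k' = k + 1 and S_{k,k'} = 0 otherwise. Then there exist matrices G_ν(i, i') ∈ ℝ^{2×2} for each ν = 0,…,L−1 and i, i' ∈ Fin 2, and vectors p, q ∈ ℝ², such that for all row and column indices k, k' ∈ Fin N with little-endian binary digit expansions k = Σ_ν i_ν 2^ν, k' = Σ_ν i'_ν 2^ν, one has S_{k,k'} = pᵀ (G_0(i₀, i'₀) G_1(i₁, i'₁) ⋯ G_{L−1}(i_{L−1}, i'_{L−1})) q. -/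
open Matrix

/-- Little-endian binary coding: the index `Σ_ν j_ν 2^ν ∈ Fin (2^L)` of a tuple
of binary digits `j : Fin L → Fin 2`. -/
def binIdx (L : ℕ) (j : Fin L → Fin 2) : Fin (2 ^ L) :=
  ⟨∑ ν : Fin L, (j ν : ℕ) * 2 ^ (ν : ℕ), by
    have key : ∀ n : ℕ, ∑ ν ∈ Finset.range n, 2 ^ ν < 2 ^ n := by
      intro n
      induction n with
      | zero => simp
      | succ n ih => rw [Finset.sum_range_succ, pow_succ]; omega
    calc ∑ ν : Fin L, (j ν : ℕ) * 2 ^ (ν : ℕ)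
        ≤ ∑ ν : Fin L, 2 ^ (ν : ℕ) := by
          refine Finset.sum_le_sum fun ν _ => ?_
          have : (j ν : ℕ) ≤ 1 := Nat.lt_succ_iff.mp (j ν).isLt
          nlinarith [pow_pos (by norm_num : (0 : ℕ) < 2) (ν : ℕ)]
      _ = ∑ ν ∈ Finset.range L, 2 ^ ν := Fin.sum_univ_eq_sum_range (fun k => 2 ^ k) L
      _ < 2 ^ L := key L⟩

/-- The upper shift matrix: `S_{k,k'} = 1` if `k' = k + 1` and `0` otherwise. -/
def shiftM (N : ℕ) : Matrix (Fin N) (Fin N) ℝ :=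
  Matrix.of fun k k' => if (k' : ℕ) = (k : ℕ) + 1 then 1 else 0

/-!
Adding one to `k` in binary is a carry running up from the least significant digit, so the
relation `k' = k + 1` is recognised by a two-state automaton (carry / no carry) reading the digit
pairs `(i_ν, i'_ν)` from `ν = 0` upwards: a carry survives `(1, 0)`, is absorbed by `(0, 1)`, and
without a carry the digits must agree. The cores are the transition matrices of this automaton,
so after `n` digits the product relates the truncations `k, k' < 2^n` by `k' + 2^n = k + 1`
(carry in and out), `k' = k + 1` (carry in, none out) or `k' = k` (no carry). Taking `p = e₀`,
`q = e₁` injects a carry at the bottom and forbids one leaving the top.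
-/

section QTTShift

variable {R : Type*} [Semiring R]

def shiftCore (i i' : Fin 2) : Matrix (Fin 2) (Fin 2) R :=
  !![if i = 1 ∧ i' = 0 then 1 else 0, if i = 0 ∧ i' = 1 then 1 else 0;
     0, if i = i' then 1 else 0]

def shiftPrefix (n k k' : ℕ) : Matrix (Fin 2) (Fin 2) R :=
  !![if k' + 2 ^ n = k + 1 then 1 else 0, if k' = k + 1 then 1 else 0;
     0, if k' = k then 1 else 0]

theorem binIdx_succ_val (n : ℕ) (j : Fin (n + 1) → Fin 2) :
    (binIdx (n + 1) j : ℕ) = binIdx n (fun ν => j ν.castSucc) + (j (Fin.last n) : ℕ) * 2 ^ n :=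
  Fin.sum_univ_castSucc _

theorem shiftPrefix_mul_shiftCore {n k k' : ℕ} (hk : k < 2 ^ n) (hk' : k' < 2 ^ n)
    (a a' : Fin 2) :
    (shiftPrefix n k k' * shiftCore a a' : Matrix (Fin 2) (Fin 2) R) =
      shiftPrefix (n + 1) (k + a * 2 ^ n) (k' + a' * 2 ^ n) := by
  have hpow : 2 ^ (n + 1) = 2 ^ n + 2 ^ n := by ring
  rw [shiftPrefix, shiftCore, shiftPrefix, mul_fin_two]
  fin_cases a <;> fin_cases a' <;> simp <;> grind

theorem prod_shiftCore (n : ℕ) (i i' : Fin n → Fin 2) :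
    (List.ofFn fun ν => shiftCore (i ν) (i' ν)).prod =
      (shiftPrefix n (binIdx n i) (binIdx n i') : Matrix (Fin 2) (Fin 2) R) := by
  induction n with
  | zero => ext r c; fin_cases r <;> fin_cases c <;> simp [shiftPrefix, binIdx]
  | succ n ih =>
    rw [List.ofFn_succ', List.concat_eq_append, List.prod_append, ih, List.prod_singleton,
      shiftPrefix_mul_shiftCore (binIdx n _).isLt (binIdx n _).isLt, binIdx_succ_val,
      binIdx_succ_val]

end QTTShift

theorem stmt18_general (L : ℕ) :
    ∃ (G : Fin L → Fin 2 → Fin 2 → Matrix (Fin 2) (Fin 2) ℝ) (p q : Fin 2 → ℝ),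
      ∀ i i' : Fin L → Fin 2,
        shiftM (2 ^ L) (binIdx L i) (binIdx L i') =
          p ⬝ᵥ ((List.ofFn fun ν : Fin L => G ν (i ν) (i' ν)).prod).mulVec q := by
  refine ⟨fun _ => shiftCore, Pi.single 0 1, Pi.single 1 1, fun i i' => ?_⟩
  rw [mulVec_single_one, single_one_dotProduct, prod_shiftCore]
  simp [shiftM, shiftPrefix]

/-- exact rank-2 QTT representation of the shift matrix,
Kazeev–Khoromskij, used in §4.3. For `L ≥ 1` there exist `2×2` cores
`G_ν(i, i')` and vectors `p, q ∈ ℝ²` such that for all row/column binary digit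
tuples `i, i'`, `S_{Σ i_ν 2^ν, Σ i'_ν 2^ν} = pᵀ (G_0(i₀,i'₀)⋯G_{L−1}(i_{L−1},i'_{L−1})) q`. -/
theorem stmt18 (L : ℕ) (hL : 1 ≤ L) :
    ∃ (G : Fin L → Fin 2 → Fin 2 → Matrix (Fin 2) (Fin 2) ℝ) (p q : Fin 2 → ℝ),
      ∀ i i' : Fin L → Fin 2,
        shiftM (2 ^ L) (binIdx L i) (binIdx L i') =
          p ⬝ᵥ ((List.ofFn fun ν : Fin L => G ν (i ν) (i' ν)).prod).mulVec q :=
  stmt18_general L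
end
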